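/- arXiv:2312.01901 — 8 statements merged into one kernel-verified Lean document; each statement's English description precedes it below -/
import Mathlib

section
/- For every directed graph H, γ(H) = |E(H)|/2 if and only if every pair of distinct vertices of H either induces a directed 2-cycle (arcs in both directions) or induces no arcs at all. -/
/-!
Any injective ranking of the vertices splits the loopless arc set into forward and backward
arcs, and both halves are acyclic, so `|E(H)| ≤ 2γ(H)` always. If `H` is symmetric, an acyclic
subgraph and its reverse are disjoint (it has no 2-cycle), which gives `2γ(H) ≤ |E(H)|`.
Conversely, if `2γ(H) = |E(H)|` then every ranking has exactly `γ(H)` forward arcs; comparing two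
rankings that differ only by exchanging `u` and `v` in first and second place shows that
`(u, v)` is an arc exactly when `(v, u)` is.
-/

open Finset Function

section

variable {V : Type} {A : Finset (V × V)} {g : ℕ}

def HasDirectedCycle (B : Finset (V × V)) : Prop :=
  ∃ k, 2 ≤ k ∧ ∃ v : ZMod k → V, Injective v ∧ ∀ i : ZMod k, (v i, v (i + 1)) ∈ B

/-- `γ` of the digraph with arc set `A` is the maximum of this set. -/
def acyclicSubgraphSizes (A : Finset (V × V)) : Set ℕ :=
  {m | ∃ B ⊆ A, ¬ HasDirectedCycle B ∧ B.card = m}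

theorem not_hasDirectedCycle_of_forall_lt {α : Type*} [LinearOrder α] (r : V → α)
    {B : Finset (V × V)} (hB : ∀ p ∈ B, r p.1 < r p.2) : ¬ HasDirectedCycle B := by
  rintro ⟨k, hk, v, -, hcyc⟩
  have : NeZero k := ⟨by omega⟩
  obtain ⟨i, -, hmax⟩ := exists_max_image univ (fun i => r (v i)) univ_nonempty
  exact (hB _ (hcyc i)).not_ge (hmax (i + 1) (mem_univ _))

theorem hasDirectedCycle_of_mem_of_mem {B : Finset (V × V)} {a b : V} (hab : a ≠ b)
    (hab' : (a, b) ∈ B) (hba : (b, a) ∈ B) : HasDirectedCycle B := by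
  refine ⟨2, le_rfl, ![a, b], ?_, fun i => ?_⟩
  · intro i j
    fin_cases i <;> fin_cases j <;> simp [hab, hab.symm] <;> rfl
  · fin_cases i
    exacts [hab', hba]

theorem fst_ne_snd_of_mem (hloop : ∀ v : V, (v, v) ∉ A) {p : V × V} (hp : p ∈ A) :
    p.1 ≠ p.2 := by
  obtain ⟨a, b⟩ := p
  rintro (rfl : a = b)
  exact hloop a hp

theorem card_le_of_forall_lt {α : Type*} [LinearOrder α]
    (hg : IsGreatest (acyclicSubgraphSizes A) g) (r : V → α) {B : Finset (V × V)} (hBA : B ⊆ A)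
    (hB : ∀ p ∈ B, r p.1 < r p.2) : B.card ≤ g :=
  hg.2 ⟨B, hBA, not_hasDirectedCycle_of_forall_lt r hB, rfl⟩

theorem card_filter_lt_add_card_filter_gt {α : Type*} [LinearOrder α]
    (hloop : ∀ v : V, (v, v) ∉ A) {r : V → α} (hr : Injective r) :
    (A.filter fun p => r p.1 < r p.2).card + (A.filter fun p => r p.2 < r p.1).card = A.card := by
  have hgt : (A.filter fun p => r p.2 < r p.1) = A.filter fun p => ¬ r p.1 < r p.2 :=
    filter_congr fun p hp =>
      have : r p.1 ≠ r p.2 := hr.ne (fst_ne_snd_of_mem hloop hp)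
      ⟨fun h => not_lt.2 h.le, fun h => lt_of_le_of_ne (not_lt.1 h) this.symm⟩
  rw [hgt, card_filter_add_card_filter_not]

theorem card_filter_lt_le_and_card_filter_gt_le {α : Type*} [LinearOrder α]
    (hg : IsGreatest (acyclicSubgraphSizes A) g) (r : V → α) :
    (A.filter fun p => r p.1 < r p.2).card ≤ g ∧ (A.filter fun p => r p.2 < r p.1).card ≤ g :=
  ⟨card_le_of_forall_lt hg r (filter_subset _ A) fun _ hp => (mem_filter.1 hp).2,
    card_le_of_forall_lt hg (OrderDual.toDual ∘ r) (filter_subset _ A)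
      fun _ hp => (mem_filter.1 hp).2⟩

theorem card_le_two_mul [Countable V] (hloop : ∀ v : V, (v, v) ∉ A)
    (hg : IsGreatest (acyclicSubgraphSizes A) g) : A.card ≤ 2 * g := by
  obtain ⟨r, hr⟩ := exists_injective_nat V
  have := card_filter_lt_add_card_filter_gt hloop hr
  have := card_filter_lt_le_and_card_filter_gt_le hg r
  omega

theorem card_filter_lt_eq_of_two_mul_eq (hloop : ∀ v : V, (v, v) ∉ A)
    (hg : IsGreatest (acyclicSubgraphSizes A) g) (h2g : 2 * g = A.card)
    {r : V → ℕ} (hr : Injective r) : (A.filter fun p => r p.1 < r p.2).card = g := by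
  have := card_filter_lt_add_card_filter_gt hloop hr
  have := card_filter_lt_le_and_card_filter_gt_le hg r
  omega

theorem two_mul_card_le_of_swap_mem (hloop : ∀ v : V, (v, v) ∉ A)
    (hswap : ∀ p ∈ A, p.swap ∈ A) {B : Finset (V × V)} (hBA : B ⊆ A)
    (hB : ¬ HasDirectedCycle B) : 2 * B.card ≤ A.card := by
  let swapEmb := (Equiv.prodComm V V).toEmbedding
  have hdisj : Disjoint B (B.map swapEmb) := by
    rw [disjoint_left]
    rintro ⟨a, b⟩ hab hba
    rw [mem_map_equiv] at hba
    exact hB (hasDirectedCycle_of_mem_of_mem (fst_ne_snd_of_mem hloop (hBA hab)) hab hba)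
  have hsub : B.disjUnion (B.map swapEmb) hdisj ⊆ A := by
    intro p hp
    rcases mem_disjUnion.1 hp with hp | hp
    · exact hBA hp
    · exact Prod.swap_swap p ▸ hswap _ (hBA (mem_map_equiv.1 hp))
  calc 2 * B.card = (B.disjUnion (B.map swapEmb) hdisj).card := by
        rw [card_disjUnion, card_map, two_mul]
    _ ≤ A.card := card_le_card hsub

variable [DecidableEq V]

def rankFirst (u v : V) (e : V → ℕ) (w : V) : ℕ :=
  if w = u then 0 else if w = v then 1 else e w + 2

theorem rankFirst_injective {u v : V} (huv : u ≠ v) {e : V → ℕ} (he : Injective e) :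
    Injective (rankFirst u v e) := by
  intro a b h
  simp only [rankFirst] at h
  split_ifs at h <;> subst_vars <;> first | rfl | omega | exact he (by omega)

theorem rankFirst_lt_or_eq_iff (u v : V) (e : V → ℕ) (a b : V) :
    rankFirst u v e a < rankFirst u v e b ∨ (a, b) = (v, u) ↔
      rankFirst v u e a < rankFirst v u e b ∨ (a, b) = (u, v) := by
  simp only [rankFirst, Prod.mk.injEq]
  split_ifs <;> subst_vars <;> simp_all

theorem card_filter_rankFirst_lt_or_eq (hloop : ∀ v : V, (v, v) ∉ A)
    (hg : IsGreatest (acyclicSubgraphSizes A) g) (h2g : 2 * g = A.card)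
    {u v : V} (huv : u ≠ v) {e : V → ℕ} (he : Injective e) :
    (A.filter fun p => rankFirst u v e p.1 < rankFirst u v e p.2 ∨ p = (v, u)).card =
      g + if (v, u) ∈ A then 1 else 0 := by
  have hdisj : Disjoint (A.filter fun p => rankFirst u v e p.1 < rankFirst u v e p.2)
      (A.filter fun p => p = (v, u)) :=
    disjoint_filter.2 fun p _ hlt hp => by
      subst hp
      simp [rankFirst, huv.symm] at hlt
  rw [filter_or, card_union_of_disjoint hdisj,
    card_filter_lt_eq_of_two_mul_eq hloop hg h2g (rankFirst_injective huv he), filter_eq',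
    apply_ite card, card_singleton, card_empty]

theorem mem_iff_swap_mem_of_two_mul_eq [Countable V] (hloop : ∀ v : V, (v, v) ∉ A)
    (hg : IsGreatest (acyclicSubgraphSizes A) g) (h2g : 2 * g = A.card) {u v : V}
    (huv : u ≠ v) : (u, v) ∈ A ↔ (v, u) ∈ A := by
  obtain ⟨e, he⟩ := exists_injective_nat V
  have h := card_filter_rankFirst_lt_or_eq hloop hg h2g huv he
  rw [filter_congr fun p _ => rankFirst_lt_or_eq_iff u v e p.1 p.2,
    card_filter_rankFirst_lt_or_eq hloop hg h2g huv.symm he] at h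
  split_ifs at h <;> simp_all

end

theorem stmt_2_general {V : Type} [Fintype V] (A : Finset (V × V))
    (hloop : ∀ v : V, (v, v) ∉ A) (g : ℕ)
    (hg : IsGreatest {m | ∃ B ⊆ A,
        (¬ ∃ k, 2 ≤ k ∧ ∃ v : ZMod k → V, Function.Injective v ∧
          ∀ i : ZMod k, (v i, v (i + 1)) ∈ B) ∧ B.card = m} g) :
    2 * g = A.card ↔ ∀ u v : V, u ≠ v →
      ((u, v) ∈ A ∧ (v, u) ∈ A) ∨ ((u, v) ∉ A ∧ (v, u) ∉ A) := by
  classical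
  change IsGreatest (acyclicSubgraphSizes A) g at hg
  constructor
  · intro h2g u v huv
    have := mem_iff_swap_mem_of_two_mul_eq hloop hg h2g huv
    tauto
  · intro hsym
    have hswap : ∀ p ∈ A, p.swap ∈ A := fun p hp =>
      (hsym p.1 p.2 (fst_ne_snd_of_mem hloop hp)).elim (·.2) fun h => absurd hp h.1
    obtain ⟨B, hBA, hB, rfl⟩ := hg.1
    have := two_mul_card_le_of_swap_mem hloop hswap hBA hB
    have := card_le_two_mul hloop hg
    omega

/-- For a finite loopless directed graph `H`, `γ(H) = |E(H)|/2` iff every pair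
of distinct vertices either induces a directed 2-cycle or no arcs at all.
`γ(H)` is the maximum number of arcs in an acyclic subgraph (2-cycles count as cycles). -/
theorem stmt_2 {V : Type} [Fintype V] [DecidableEq V] (A : Finset (V × V))
    (hloop : ∀ v : V, (v, v) ∉ A) (g : ℕ)
    (hg : IsGreatest {m | ∃ B ⊆ A,
        (¬ ∃ k, 2 ≤ k ∧ ∃ v : ZMod k → V, Function.Injective v ∧
          ∀ i : ZMod k, (v i, v (i + 1)) ∈ B) ∧ B.card = m} g) :
    2 * g = A.card ↔ ∀ u v : V, u ≠ v →
      ((u, v) ∈ A ∧ (v, u) ∈ A) ∨ ((u, v) ∉ A ∧ (v, u) ∉ A) :=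
  stmt_2_general A hloop g hg
end

section
/- For k ≥ 3 and r ≥ 2, the minimum number of arcs one must add to the blowup B(T_r) in order to create a directed k-cycle equals ⌈k/r⌉; that is, disc_{C_k}(T_r) = ⌈k/r⌉. -/
/-!
Along a `k`-cycle embedded in the augmented blowup, the part index strictly increases across every
arc of `B(T_r)`, so between two consecutive added arcs (the cyclic descents of the part index) the
cycle visits at most `r` vertices; hence `k ≤ r · #descents ≤ r · #added arcs`. Conversely, placing
the `i`-th cycle vertex in part `i mod r` (copy `i / r`) leaves at most one descent in each of the
`⌈k/r⌉` blocks of `r` consecutive indices, namely at the block's last index.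
-/

open Finset Function

section CyclicDescents

variable {k : ℕ} [NeZero k] {α : Type*} [LinearOrder α]

def cyclicDescents (f : ZMod k → α) : Finset (ZMod k) :=
  {i | ¬ f i < f (i + 1)}

@[simp]
lemma mem_cyclicDescents {f : ZMod k → α} {i : ZMod k} :
    i ∈ cyclicDescents f ↔ ¬ f i < f (i + 1) := by
  simp [cyclicDescents]

lemma exists_lt_add_mem_cyclicDescents {r : ℕ} (f : ZMod k → Fin r) (i : ZMod k) :
    ∃ s < r, i + s ∈ cyclicDescents f := by
  by_contra! hrise
  have hmono : StrictMono fun s : Fin (r + 1) => f (i + (s : ℕ)) := by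
    refine Fin.strictMono_iff_lt_succ.2 fun s => ?_
    have := hrise s s.isLt
    rw [mem_cyclicDescents, not_not] at this
    simpa [add_assoc] using this
  simpa using Fintype.card_le_of_injective _ hmono.injective

lemma le_card_cyclicDescents_mul {r : ℕ} (f : ZMod k → Fin r) :
    k ≤ r * #(cyclicDescents f) := by
  choose s hs hmem using exists_lt_add_mem_cyclicDescents f
  have := card_le_card_of_injOn (fun i => (i + s i, s i)) (s := univ)
    (t := cyclicDescents f ×ˢ range r) (fun i _ => by simp [hmem i, hs i])
    (fun i _ j _ h => by
      obtain ⟨hsum, hshift⟩ := Prod.ext_iff.1 h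
      dsimp only at hsum hshift
      exact add_right_cancel (hshift ▸ hsum))
  simpa [mul_comm] using this

variable {V : Type*} (ℓ : V → α) {v : ZMod k → V}

lemma card_cyclicDescents_le_card {F : Finset (V × V)} (hv : Injective v)
    (hF : ∀ i, ℓ (v i) < ℓ (v (i + 1)) ∨ (v i, v (i + 1)) ∈ F) :
    #(cyclicDescents (ℓ ∘ v)) ≤ #F :=
  card_le_card_of_injOn (fun i => (v i, v (i + 1)))
    (fun i hi => (hF i).resolve_left (mem_cyclicDescents.1 hi))
    (fun _ _ _ _ h => hv (Prod.ext_iff.1 h).1)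

lemma lt_or_mem_image_cyclicDescents [DecidableEq V] (v : ZMod k → V) (i : ZMod k) :
    ℓ (v i) < ℓ (v (i + 1)) ∨
      (v i, v (i + 1)) ∈ (cyclicDescents (ℓ ∘ v)).image fun i => (v i, v (i + 1)) := by
  by_cases h : ℓ (v i) < ℓ (v (i + 1))
  · exact .inl h
  · exact .inr (mem_image_of_mem _ (mem_cyclicDescents.2 h))

end CyclicDescents

lemma Nat.mod_lt_add_one_mod_of_div_eq {a b r : ℕ} (hab : a < b) (hdiv : b / r = a / r) :
    a % r < (a + 1) % r := by
  rcases Nat.eq_zero_or_pos r with rfl | hr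
  · simp
  have ha := Nat.div_add_mod a r
  have hb := Nat.div_add_mod b r
  have hbr := Nat.mod_lt b hr
  rw [hdiv] at hb
  rw [show a + 1 = a % r + 1 + r * (a / r) by omega, Nat.add_mul_mod_self_left,
    Nat.mod_eq_of_lt (show a % r + 1 < r by omega)]
  exact Nat.lt_add_one _

section RoundRobin

variable (r : ℕ) [NeZero r] {k : ℕ} [NeZero k]

def roundRobin (i : ZMod k) : Fin r × ℕ :=
  (Fin.ofNat r i.val, i.val / r)

lemma roundRobin_injective : Injective (roundRobin r : ZMod k → Fin r × ℕ) := by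
  intro i j h
  simp only [roundRobin, Prod.ext_iff, Fin.ext_iff, Fin.val_ofNat] at h
  apply ZMod.val_injective
  rw [← Nat.div_add_mod i.val r, ← Nat.div_add_mod j.val r, h.1, h.2]

lemma val_le_of_mem_cyclicDescents_roundRobin {i j : ZMod k}
    (hi : i ∈ cyclicDescents fun i => (roundRobin r i).1) (hij : j.val / r = i.val / r) :
    j.val ≤ i.val := by
  by_contra! hlt
  have hsucc : (i + 1).val = i.val + 1 := by
    have hcast : i + 1 = ((i.val + 1 : ℕ) : ZMod k) := by simp
    rw [hcast, ZMod.val_cast_of_lt (by have := j.val_lt; omega)]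
  rw [mem_cyclicDescents, Fin.lt_def] at hi
  simp only [roundRobin, Fin.val_ofNat, hsucc] at hi
  exact hi (Nat.mod_lt_add_one_mod_of_div_eq hlt hij)

lemma card_cyclicDescents_roundRobin_le :
    #(cyclicDescents fun i : ZMod k => (roundRobin r i).1) ≤ k ⌈/⌉ r := by
  have := card_le_card_of_injOn (fun i : ZMod k => i.val / r) (t := range (k ⌈/⌉ r))
    (fun i _ => by
      rw [coe_range, Set.mem_Iio, lt_iff_not_ge, ceilDiv_le_iff_le_mul (NeZero.pos r)]
      exact ((Nat.mul_div_le _ _).trans_lt i.val_lt).not_ge)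
    (fun i hi j hj h => ZMod.val_injective k
      ((val_le_of_mem_cyclicDescents_roundRobin r hj h).antisymm
        (val_le_of_mem_cyclicDescents_roundRobin r hi h.symm)))
  simpa using this

end RoundRobin

/-- For `k ≥ 3` and `r ≥ 2`, the minimum number of arcs one must add to the blowup
`B(T_r)` of the transitive tournament (vertex set `Fin r × ℕ`, arc `(i,a) → (j,b)`
iff `i < j`) in order to create a directed `k`-cycle equals `⌈k/r⌉`;
that is, `disc_{C_k}(T_r) = ⌈k/r⌉`. -/
theorem stmt_6 (k r : ℕ) (hk : 3 ≤ k) (hr : 2 ≤ r) :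
    IsLeast {m | ∃ F : Finset ((Fin r × ℕ) × (Fin r × ℕ)), F.card = m ∧
      ∃ v : ZMod k → Fin r × ℕ, Function.Injective v ∧
        ∀ i : ZMod k, (v i).1 < (v (i + 1)).1 ∨ (v i, v (i + 1)) ∈ F}
      ((k + r - 1) / r) := by
  have : NeZero k := ⟨by omega⟩
  have : NeZero r := ⟨by omega⟩
  rw [← Nat.ceilDiv_eq_add_pred_div]
  constructor
  · obtain ⟨F, hsub, hcard⟩ := Infinite.exists_superset_card_eq
      ((cyclicDescents fun i : ZMod k => (roundRobin r i).1).image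
        fun i => (roundRobin r i, roundRobin r (i + 1))) _
      (card_image_le.trans (card_cyclicDescents_roundRobin_le r (k := k)))
    exact ⟨F, hcard, roundRobin r, roundRobin_injective r,
      fun i => (lt_or_mem_image_cyclicDescents Prod.fst _ i).imp_right (hsub ·)⟩
  · rintro _ ⟨F, rfl, v, hv, hF⟩
    rw [ceilDiv_le_iff_le_mul (NeZero.pos r)]
    exact (le_card_cyclicDescents_mul _).trans
      (Nat.mul_le_mul_left r (card_cyclicDescents_le_card Prod.fst hv hF))
end

section
/- For every directed graph H and every k-vertex tournament structure: if H is a tournament on k vertices, then the maximum number of arcs in a bipartite subgraph of H (all arcs from one part to the other) equals ⌊k²/4⌋. -/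
lemma cross_card (k : ℕ) (A : Finset (Fin k × Fin k))
    (hloop : ∀ v : Fin k, (v, v) ∉ A)
    (hT : ∀ u v : Fin k, u ≠ v → ((u, v) ∈ A ↔ (v, u) ∉ A))
    (S T : Finset (Fin k)) (hd : Disjoint S T) :
    (A.filter fun p => (p.1 ∈ S ∧ p.2 ∈ T) ∨ (p.1 ∈ T ∧ p.2 ∈ S)).card
      = (S ×ˢ T).card := by
  apply Finset.card_bij' (fun p _ => if p.1 ∈ S then p else p.swap)
    (fun q _ => if q ∈ A then q else q.swap)
  · intro p hp
    simp only [Finset.mem_filter] at hp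
    obtain ⟨hpA, h | h⟩ := hp
    · simp [h.1, Finset.mem_product, h.2]
    · have h1 : p.1 ∉ S := fun hs => (Finset.disjoint_left.mp hd hs) h.1
      simp [h1, Finset.mem_product, h.2, h.1, Prod.swap]
  · intro q hq
    simp only [Finset.mem_product] at hq
    have hne : q.1 ≠ q.2 := fun h => (Finset.disjoint_left.mp hd hq.1) (h ▸ hq.2)
    by_cases hA : q ∈ A
    · rw [if_pos hA]
      exact Finset.mem_filter.mpr ⟨hA, Or.inl hq⟩
    · have hsw : (q.2, q.1) ∈ A := by
        by_contra hc
        exact hA ((hT q.1 q.2 hne).mpr (by simpa using hc))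
      rw [if_neg hA]
      exact Finset.mem_filter.mpr ⟨hsw, Or.inr ⟨hq.2, hq.1⟩⟩
  · intro p hp
    simp only [Finset.mem_filter] at hp
    obtain ⟨hpA, h | h⟩ := hp
    · simp [h.1, hpA]
    · have h1 : p.1 ∉ S := fun hs => (Finset.disjoint_left.mp hd hs) h.1
      have hne : p.1 ≠ p.2 := by
        intro h'
        exact (Finset.disjoint_left.mp hd (h' ▸ h.2)) h.1
      have hsw : p.swap ∉ A := (hT p.1 p.2 hne).mp hpA
      rw [if_neg h1, if_neg hsw, Prod.swap_swap]
  · intro q hq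
    simp only [Finset.mem_product] at hq
    by_cases hA : q ∈ A
    · rw [if_pos hA, if_pos hq.1]
    · have h2 : q.2 ∉ S := fun hs => (Finset.disjoint_left.mp hd hs) hq.2
      rw [if_neg hA, if_neg (show q.swap.1 ∉ S from h2), Prod.swap_swap]

lemma prod_le (s t k : ℕ) (h : s + t ≤ k) : s * t ≤ k ^ 2 / 4 := by
  rw [Nat.le_div_iff_mul_le (by norm_num)]
  zify
  have h' : (s : ℤ) + t ≤ k := by exact_mod_cast h
  nlinarith [sq_nonneg ((s:ℤ) - t), Int.natCast_nonneg s, Int.natCast_nonneg t]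

/-- If `H` is a tournament on `k` vertices, then `b(H)`, the maximum number of arcs
of `H` in a bipartite subgraph (all arcs between the two parts `S`, `T`),
equals `⌊k²/4⌋`. -/
theorem stmt_7 (k : ℕ) (A : Finset (Fin k × Fin k))
    (hloop : ∀ v : Fin k, (v, v) ∉ A)
    (hT : ∀ u v : Fin k, u ≠ v → ((u, v) ∈ A ↔ (v, u) ∉ A)) :
    IsGreatest {m | ∃ S T : Finset (Fin k), Disjoint S T ∧
      m = (A.filter fun p =>
        (p.1 ∈ S ∧ p.2 ∈ T) ∨ (p.1 ∈ T ∧ p.2 ∈ S)).card} (k ^ 2 / 4) := by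
  constructor
  · -- membership: take S = {v | v < k/2}, T = complement
    set S : Finset (Fin k) := Finset.univ.filter fun v => (v : ℕ) < k / 2 with hS
    refine ⟨S, Sᶜ, disjoint_compl_right, ?_⟩
    have hScard : S.card = k / 2 := by
      rcases Nat.eq_zero_or_pos k with rfl | hk
      · simp [hS]
      · have h2 : k / 2 < k := Nat.div_lt_self hk one_lt_two
        have : S = Finset.Iio ⟨k / 2, h2⟩ := by
          ext v; simp [hS, Fin.lt_def]
        rw [this, Fin.card_Iio]
    have hTcard : Sᶜ.card = k - k / 2 := by
      rw [Finset.card_compl, hScard]; simp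
    rw [cross_card k A hloop hT S Sᶜ disjoint_compl_right, Finset.card_product,
      hScard, hTcard]
    obtain ⟨m, rfl | rfl⟩ := Nat.even_or_odd' k
    · have h2 : 2 * m / 2 = m := by omega
      rw [h2, show 2 * m - m = m by omega, show (2*m)^2 = 4*(m*m) by ring,
        Nat.mul_div_cancel_left _ (by norm_num)]
    · have h2 : (2 * m + 1) / 2 = m := by omega
      rw [h2, show 2 * m + 1 - m = m + 1 by omega,
        show (2*m+1)^2 = 4*(m*(m+1))+1 by ring,
        Nat.mul_add_div (by norm_num)]
      omega
  · rintro m ⟨S, T, hd, rfl⟩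
    rw [cross_card k A hloop hT S T hd, Finset.card_product]
    apply prod_le
    have := Finset.card_union_le S T
    calc S.card + T.card = (S ∪ T).card := (Finset.card_union_of_disjoint hd).symm
      _ ≤ (Finset.univ : Finset (Fin k)).card := Finset.card_le_card (Finset.subset_univ _)
      _ = k := by simp
end

section
/- If an undirected graph G on n vertices has more than n(k-2)/2 edges (k ≥ 2), then G contains a path on k vertices. -/
/-!
Write `e(s)` for the sum of the degrees of the graph induced on `s`, and suppose `G` has no path
on `k + 2` vertices; we show `e(s) ≤ k·|s|` by strong induction on `s`. If some vertex has degree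
at most `k/2` in `s`, delete it. Otherwise take a longest path `a … b` in `s`: it has at most
`k + 1` vertices, all neighbours of `a` and `b` lie on it, and `deg a + deg b ≥ k + 1`, so by
pigeonhole there are consecutive vertices `u, w` on the path with `b ~ u` and `a ~ w`. This closes
the path into a cycle on its vertex set `T`. Every vertex of `T` is therefore the end of a path
through all of `T`, so by maximality no vertex of `s \ T` is adjacent to `T`. Hence
`e(s) = e(T) + e(s \ T) ≤ |T|(|T| - 1) + k·|s \ T| ≤ k·|s|`.
-/

open Finset

namespace Cycle

variable {α : Type*} {r : α → α → Prop}

theorem Chain.exists_perm_isChain_cons {C : List α} (hC : Chain r (C : Cycle α)) {c : α}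
    (hc : c ∈ C) : ∃ P : List α, (c :: P).Perm C ∧ (c :: P).IsChain r := by
  obtain ⟨X, Y, rfl⟩ := List.append_of_mem hc
  have hrot : (X ++ c :: Y) ~r (c :: (Y ++ X)) := List.isRotated_append
  rw [coe_eq_coe.2 hrot, chain_coe_cons] at hC
  exact ⟨Y ++ X, hrot.perm.symm, hC.prefix ⟨[c], by simp⟩⟩

end Cycle

namespace List

variable {α : Type*}

theorem exists_eq_append_cons_cons_of_length_tail_lt {p q : α → Prop} [DecidablePred p]
    [DecidablePred q] : ∀ {l : List α},
    l.tail.length < l.dropLast.countP (p ·) + l.tail.countP (q ·) →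
      ∃ X Y u w, l = X ++ u :: w :: Y ∧ p u ∧ q w
  | [], h => by simp at h
  | [_], h => by simp at h
  | u :: w :: t, h => by
    by_cases huw : p u ∧ q w
    · exact ⟨[], t, u, w, rfl, huw⟩
    · have hle : (if p u then 1 else 0) + (if q w then 1 else 0) ≤ 1 := by
        split_ifs <;> simp_all
      obtain ⟨X, Y, x, y, hl, hx, hy⟩ :=
        exists_eq_append_cons_cons_of_length_tail_lt (p := p) (q := q) (l := w :: t) (by
          simp only [dropLast_cons_cons, tail_cons, length_cons, countP_cons,
            decide_eq_true_eq] at h ⊢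
          omega)
      exact ⟨u :: X, Y, x, y, by rw [hl, cons_append], hx, hy⟩

theorem Nodup.countP_eq_card_filter {p : α → Prop} [DecidablePred p] {l : List α}
    (hl : l.Nodup) {s : Finset α} (hls : ∀ x ∈ l, x ∈ s) (hsl : ∀ x ∈ s, p x → x ∈ l) :
    l.countP (p ·) = #{x ∈ s | p x} := by
  classical
  rw [countP_eq_length_filter, ← toFinset_card_of_nodup (hl.filter _)]
  congr 1
  ext x
  simp only [mem_toFinset, mem_filter, Finset.mem_filter, decide_eq_true_eq]
  exact ⟨fun h => ⟨hls x h.1, h.2⟩, fun h => ⟨hsl x h.1 h.2, h.2⟩⟩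

end List

namespace SimpleGraph

variable {V : Type*} {G : SimpleGraph V}

section DegreeSum

variable (G) [DecidableRel G.Adj]

def degreeSumOn (s : Finset V) : ℕ := ∑ v ∈ s, #{u ∈ s | G.Adj v u}

variable {G}

theorem degreeSumOn_union [DecidableEq V] {T R : Finset V} (h : Disjoint T R) :
    G.degreeSumOn (T ∪ R) =
      G.degreeSumOn T + G.degreeSumOn R + 2 * ∑ x ∈ T, #{y ∈ R | G.Adj x y} := by
  have hsplit : ∀ x, #{y ∈ T ∪ R | G.Adj x y} = #{y ∈ T | G.Adj x y} + #{y ∈ R | G.Adj x y} :=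
    fun x => by rw [filter_union, card_union_of_disjoint (disjoint_filter_filter h)]
  have hcross : ∑ y ∈ R, #{x ∈ T | G.Adj y x} = ∑ x ∈ T, #{y ∈ R | G.Adj x y} :=
    ((sum_card_bipartiteAbove_eq_sum_card_bipartiteBelow G.Adj).trans
      (sum_congr rfl fun y _ => congrArg card (filter_congr fun x _ => G.adj_comm x y))).symm
  simp only [degreeSumOn, sum_union h, hsplit, sum_add_distrib, hcross]
  ring

theorem degreeSumOn_eq_erase [DecidableEq V] {s : Finset V} {v : V} (hv : v ∈ s) :
    G.degreeSumOn s = G.degreeSumOn (s.erase v) + 2 * #{u ∈ s | G.Adj v u} := by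
  have hs : s = {v} ∪ s.erase v := by rw [← insert_eq, insert_erase hv]
  conv_lhs => rw [hs, degreeSumOn_union (disjoint_singleton_left.2 (notMem_erase v s))]
  simp [degreeSumOn, filter_erase]

theorem degreeSumOn_union_of_forall_not_adj [DecidableEq V] {T R : Finset V} (h : Disjoint T R)
    (hTR : ∀ x ∈ T, ∀ y ∈ R, ¬G.Adj x y) :
    G.degreeSumOn (T ∪ R) = G.degreeSumOn T + G.degreeSumOn R := by
  rw [degreeSumOn_union h,
    sum_eq_zero fun x hx => by rw [filter_false_of_mem (hTR x hx), card_empty], mul_zero, add_zero]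

theorem degreeSumOn_le_card_mul (s : Finset V) : G.degreeSumOn s ≤ #s * (#s - 1) := by
  classical
  calc G.degreeSumOn s ≤ ∑ v ∈ s, (#s - 1) := sum_le_sum fun v hv => by
        rw [← card_erase_of_mem hv]
        exact card_le_card fun u hu => by
          rw [mem_filter] at hu
          exact mem_erase.2 ⟨hu.2.ne', hu.1⟩
    _ = #s * (#s - 1) := by rw [sum_const, smul_eq_mul]

theorem degreeSumOn_univ [Fintype V] : G.degreeSumOn univ = 2 * #G.edgeFinset := by
  simp [degreeSumOn, ← sum_degrees_eq_twice_card_edges, degree, neighborFinset_eq_filter]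

end DegreeSum

theorem cycle_chain_adj_append_cons_reverse {X Y : List V} {u w : V}
    (hl : (X ++ u :: w :: Y).IsChain G.Adj) (ha : ∀ a ∈ (X ++ u :: w :: Y).head?, G.Adj a w)
    (hb : ∀ b ∈ (X ++ u :: w :: Y).getLast?, G.Adj b u) :
    Cycle.Chain G.Adj ↑(X ++ u :: (w :: Y).reverse) := by
  have ha' : G.Adj w (X.head?.getD u) := (ha _ (by cases X <;> simp)).symm
  have hb' : G.Adj u (Y.getLast?.getD w) := (hb _ (by simp [List.getLast?_cons])).symm
  have hsymm : (fun a b => G.Adj b a) = G.Adj := by ext; exact G.adj_comm _ _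
  simp only [List.isChain_append, List.isChain_cons] at hl
  obtain ⟨hX, ⟨-, hwY, hY⟩, hXu⟩ := hl
  have hXu' : ∀ x, X.getLast? = some x → G.Adj x u := fun x hx => hXu x hx u rfl
  have hYw : ∀ y, Y.head? = some y → G.Adj y w := fun y hy => (hwY y hy).symm
  rw [Cycle.chain_ne_nil _ (by simp)]
  simpa [List.isChain_append, List.isChain_cons, List.isChain_reverse, hsymm, ha', hb', hX, hY]
    using And.intro hYw hXu'

structure IsPathIn (G : SimpleGraph V) (s : Finset V) (l : List V) : Prop where
  isChain : l.IsChain G.Adj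
  nodup : l.Nodup
  mem : ∀ x ∈ l, x ∈ s

structure IsLongestPathIn (G : SimpleGraph V) (s : Finset V) (l : List V) : Prop
    extends G.IsPathIn s l where
  length_le : ∀ l', G.IsPathIn s l' → l'.length ≤ l.length

variable {s : Finset V} {l : List V}

theorem IsPathIn.length_le_card (h : G.IsPathIn s l) : l.length ≤ #s := by
  classical
  rw [← List.toFinset_card_of_nodup h.nodup]
  exact card_le_card fun x hx => h.mem x (List.mem_toFinset.1 hx)

theorem exists_isLongestPathIn (G : SimpleGraph V) (s : Finset V) :
    ∃ l, G.IsLongestPathIn s l := by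
  set lengths := {n | ∃ l, G.IsPathIn s l ∧ l.length = n}
  have hne : lengths.Nonempty := ⟨0, [], ⟨.nil, .nil, by simp⟩, rfl⟩
  have hbdd : BddAbove lengths := ⟨#s, by rintro _ ⟨l, hl, rfl⟩; exact hl.length_le_card⟩
  obtain ⟨l, hl, hlen⟩ := Nat.sSup_mem hne hbdd
  exact ⟨l, hl, fun l' hl' => hlen ▸ le_csSup hbdd ⟨l', hl', rfl⟩⟩

namespace IsLongestPathIn

theorem ne_nil (h : G.IsLongestPathIn s l) {v : V} (hv : v ∈ s) : l ≠ [] := by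
  rintro rfl
  simpa using h.length_le [v] ⟨.singleton v, List.nodup_singleton v, by simpa using hv⟩

theorem of_perm (h : G.IsLongestPathIn s l) {l' : List V} (hl' : l'.Perm l)
    (hc : l'.IsChain G.Adj) : G.IsLongestPathIn s l' :=
  ⟨⟨hc, hl'.nodup_iff.2 h.nodup, fun x hx => h.mem x (hl'.mem_iff.1 hx)⟩,
    fun m hm => hl'.length_eq ▸ h.length_le m hm⟩

theorem reverse (h : G.IsLongestPathIn s l) : G.IsLongestPathIn s l.reverse :=
  h.of_perm (List.reverse_perm l) (List.isChain_reverse.2 (h.isChain.imp fun _ _ hxy => hxy.symm))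

theorem mem_of_adj {c : V} {P : List V} (h : G.IsLongestPathIn s (c :: P)) {u : V} (hu : u ∈ s)
    (hcu : G.Adj c u) : u ∈ P := by
  by_contra huP
  have hext : G.IsPathIn s (u :: c :: P) :=
    ⟨h.isChain.cons_cons hcu.symm, List.nodup_cons.2 ⟨by simp [hcu.ne', huP], h.nodup⟩,
      by simpa [hu] using h.mem⟩
  simpa using h.length_le _ hext

theorem not_adj_of_cycle (h : G.IsLongestPathIn s l) {C : List V} (hCl : C.Perm l)
    (hC : Cycle.Chain G.Adj (C : Cycle V)) {x y : V} (hx : x ∈ l) (hy : y ∈ s) (hyl : y ∉ l) :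
    ¬G.Adj x y := by
  intro hxy
  obtain ⟨P, hPC, hP⟩ := hC.exists_perm_isChain_cons (hCl.mem_iff.2 hx)
  have hyP := (h.of_perm (hPC.trans hCl) hP).mem_of_adj hy hxy
  exact hyl ((hPC.trans hCl).mem_iff.1 (List.mem_cons_of_mem x hyP))

theorem exists_cycle [DecidableRel G.Adj] {a : V} {t : List V} (h : G.IsLongestPathIn s (a :: t))
    (hdeg : t.length < #{u ∈ s | G.Adj a u} +
      #{u ∈ s | G.Adj ((a :: t).getLast (List.cons_ne_nil a t)) u}) :
    ∃ C : List V, C.Perm (a :: t) ∧ Cycle.Chain G.Adj (C : Cycle V) := by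
  set b := (a :: t).getLast (List.cons_ne_nil a t)
  have hdega : t.countP (G.Adj a ·) = #{u ∈ s | G.Adj a u} :=
    h.nodup.of_cons.countP_eq_card_filter (fun x hx => h.mem x (.tail a hx))
      fun u hu hau => h.mem_of_adj hu hau
  have hrev : (a :: t).reverse = b :: (a :: t).dropLast.reverse := by
    conv_lhs => rw [← List.dropLast_append_getLast (List.cons_ne_nil a t)]
    simp [b]
  have hdegb : (a :: t).dropLast.countP (G.Adj b ·) = #{u ∈ s | G.Adj b u} := by
    have hr := h.reverse
    rw [hrev] at hr
    rw [← List.countP_reverse]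
    exact hr.nodup.of_cons.countP_eq_card_filter (fun x hx => hr.mem x (.tail b hx))
      fun u hu hbu => hr.mem_of_adj hu hbu
  obtain ⟨X, Y, u, w, hsplit, hbu, haw⟩ :=
    List.exists_eq_append_cons_cons_of_length_tail_lt (p := G.Adj b) (q := G.Adj a)
      (l := a :: t) (by simp only [List.tail_cons]; omega)
  refine ⟨X ++ u :: (w :: Y).reverse, ?_, ?_⟩
  · rw [hsplit]
    exact ((List.reverse_perm _).cons u).append_left X
  · refine cycle_chain_adj_append_cons_reverse (hsplit ▸ h.isChain) ?_ ?_
    · rw [← hsplit]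
      simpa using haw
    · rw [← hsplit, List.getLast?_eq_some_getLast (List.cons_ne_nil a t)]
      simpa using hbu

end IsLongestPathIn

theorem degreeSumOn_le_of_forall_length_le [DecidableRel G.Adj] {k : ℕ}
    (hP : ∀ l : List V, l.IsChain G.Adj → l.Nodup → l.length ≤ k + 1) (s : Finset V) :
    G.degreeSumOn s ≤ #s * k := by
  classical
  induction s using Finset.strongInduction with | H s ih => ?_
  by_cases hlow : ∃ v ∈ s, 2 * #{u ∈ s | G.Adj v u} ≤ k
  · obtain ⟨v, hv, hdeg⟩ := hlow
    have hrest := ih _ (erase_ssubset hv)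
    rw [degreeSumOn_eq_erase hv, ← card_erase_add_one hv, add_one_mul]
    omega
  push Not at hlow
  obtain rfl | ⟨v, hv⟩ := s.eq_empty_or_nonempty
  · simp [degreeSumOn]
  obtain ⟨l, hl⟩ := G.exists_isLongestPathIn s
  obtain ⟨a, t, rfl⟩ := List.exists_cons_of_ne_nil (hl.ne_nil hv)
  have hlen : t.length ≤ k := by simpa using hP _ hl.isChain hl.nodup
  obtain ⟨C, hCl, hC⟩ := hl.exists_cycle (by
    have := hlow a (hl.mem a (List.mem_cons_self ..))
    have := hlow _ (hl.mem _ (List.getLast_mem (List.cons_ne_nil a t)))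
    omega)
  set T := (a :: t).toFinset
  have hTs : T ⊆ s := fun x hx => hl.mem x (List.mem_toFinset.1 hx)
  have hT : #T = t.length + 1 := List.toFinset_card_of_nodup hl.nodup
  have hcross : ∀ x ∈ T, ∀ y ∈ s \ T, ¬G.Adj x y := fun x hx y hy =>
    hl.not_adj_of_cycle hCl hC (List.mem_toFinset.1 hx) (mem_sdiff.1 hy).1
      (fun h => (mem_sdiff.1 hy).2 (List.mem_toFinset.2 h))
  rw [← union_sdiff_of_subset hTs, degreeSumOn_union_of_forall_not_adj disjoint_sdiff hcross,
    card_union_of_disjoint disjoint_sdiff, add_mul]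
  have hTbound : G.degreeSumOn T ≤ #T * k :=
    (degreeSumOn_le_card_mul T).trans (Nat.mul_le_mul_left _ (by omega))
  have hrest := ih _ (sdiff_ssubset hTs ⟨a, by simp [T]⟩)
  omega

theorem exists_isPath_length_eq_of_isChain {l : List V} (hc : l.IsChain G.Adj) (hnd : l.Nodup)
    {k : ℕ} (hk : 0 < k) (hkl : k ≤ l.length) :
    ∃ (a b : V) (p : G.Walk a b), p.IsPath ∧ p.length + 1 = k := by
  have hlen : (l.take k).length = k := List.length_take_of_le hkl
  have hne : l.take k ≠ [] := List.ne_nil_of_length_pos (by omega)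
  refine ⟨_, _, Walk.ofSupport _ hne (hc.prefix (List.take_prefix k l)), ?_, ?_⟩
  · rw [Walk.isPath_def, Walk.support_ofSupport]
    exact hnd.sublist (List.take_sublist k l)
  · rw [← Walk.length_support, Walk.support_ofSupport, hlen]

end SimpleGraph

/-- Erdős–Gallai type fact: if a simple undirected graph `G` on `n` vertices has
more than `n(k-2)/2` edges (`k ≥ 2`), then `G` contains a path on `k` vertices. -/
theorem stmt_8 (n k : ℕ) (hk : 2 ≤ k) (G : SimpleGraph (Fin n)) [DecidableRel G.Adj]
    (h : n * (k - 2) < 2 * G.edgeFinset.card) :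
    ∃ (a b : Fin n) (p : G.Walk a b), p.IsPath ∧ p.length + 1 = k := by
  obtain ⟨m, rfl⟩ := Nat.exists_eq_add_of_le' hk
  by_contra hno
  have hshort : ∀ l : List (Fin n), l.IsChain G.Adj → l.Nodup → l.length ≤ m + 1 :=
    fun l hc hnd => by
      by_contra! hlong
      exact hno (G.exists_isPath_length_eq_of_isChain hc hnd (by omega) hlong)
  have hsum := G.degreeSumOn_le_of_forall_length_le hshort univ
  rw [SimpleGraph.degreeSumOn_univ, card_univ, Fintype.card_fin] at hsum
  rw [Nat.add_sub_cancel] at h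
  omega
end

section
/- Let H be a directed graph, L a nonempty directed graph, D an arc-weighted directed multigraph with weight function w, and c an optimal fractional H-cover of D. Suppose α > 0 and there is an arc e with c(e) ≥ α. If τ_H(D \ e) ≤ α⁻¹ ν*_H(D \ e), then τ_H(D) ≤ α⁻¹ ν*_H(D). -/
/-! An arc-weighted directed multigraph `D` is given by a vertex type `V`, an arc
index type `ι` with endpoint maps `src, dst : ι → V`, an active arc set
`E : Finset ι` and a weight function `w : ι → ℝ`. The directed graph `H` is given
by a vertex type `W` and arc set `HA : Finset (W × W)`. Deleting an arc `e`
corresponds to replacing `E` by `E.erase e`. -/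

/-- A copy of `H` in the multigraph, given by a vertex embedding `φ` and an
arc selection `ψ` (injective on the arcs of `H`) with matching endpoints. -/
def IsHCopy {V ι W : Type} (HA : Finset (W × W)) (src dst : ι → V) (E : Finset ι)
    (φ : W → V) (ψ : W × W → ι) : Prop :=
  Function.Injective φ ∧ Set.InjOn ψ ↑HA ∧
    ∀ a ∈ HA, ψ a ∈ E ∧ src (ψ a) = φ a.1 ∧ dst (ψ a) = φ a.2

/-- A fractional `H`-cover: `c : E → [0,1]` with total value at least `1` on the
arcs of every `H`-copy. -/
def IsFracCover {V ι W : Type} (HA : Finset (W × W)) (src dst : ι → V) (E : Finset ι)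
    (c : ι → ℝ) : Prop :=
  (∀ i, 0 ≤ c i ∧ c i ≤ 1) ∧
    ∀ φ ψ, IsHCopy HA src dst E φ ψ → 1 ≤ ∑ a ∈ HA, c (ψ a)

/-- The value of a fractional cover: `Σ_e w(e) c(e)`. -/
def coverValue {ι : Type} (E : Finset ι) (w c : ι → ℝ) : ℝ := ∑ i ∈ E, w i * c i

open Classical in
/-- A fractional `H`-packing: a nonnegative weighting of the `H`-copies such that
for every arc the total weight of the copies through it is at most the arc weight. -/
noncomputable def IsFracPacking {V ι W : Type} [Fintype V] [Fintype ι] [Fintype W]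
    [DecidableEq W] (HA : Finset (W × W)) (src dst : ι → V) (E : Finset ι)
    (w : ι → ℝ) (m : (W → V) × (W × W → ι) → ℝ) : Prop :=
  (∀ p, 0 ≤ m p) ∧
  (∀ p, ¬ IsHCopy HA src dst E p.1 p.2 → m p = 0) ∧
  ∀ i ∈ E, (∑ p : (W → V) × (W × W → ι),
      if ∃ a ∈ HA, p.2 a = i then m p else 0) ≤ w i

/-- The value of a fractional packing. -/
noncomputable def packingValue {V ι W : Type} [Fintype V] [Fintype ι] [Fintype W]
    [DecidableEq W] (m : (W → V) × (W × W → ι) → ℝ) : ℝ := ∑ p, m p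

/-- `F` is an `H`-cover (meets every copy of `H`). -/
def IsCoverSet {V ι W : Type} (HA : Finset (W × W)) (src dst : ι → V) (E : Finset ι)
    (F : Finset ι) : Prop :=
  ∀ φ ψ, IsHCopy HA src dst E φ ψ → ∃ a ∈ HA, ψ a ∈ F

/-!
Adding `e` to a minimum `H`-cover `F` of `D \ e` gives an `H`-cover of `D` of weight at most
`α⁻¹ ν*(D \ e) + w(e)`. The optimal fractional cover `c`, restricted to `D \ e`, is still a
fractional cover, so weak duality gives `ν*(D \ e) ≤ τ*(D) - w(e) c(e) ≤ τ*(D) - α w(e)`, and strong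
duality `τ*(D) ≤ ν*(D)` finishes the proof.

For strong duality, Farkas' lemma in the closed-cone form only produces nonnegative weightings of
the copies that overload every arc by some `δ > 0` and have value at least `τ*(D) - δ`. Scaling each
copy by `∏ w(i) / (w(i) + δ)` over its arcs turns such a weighting into a packing while losing at most
`δ` per arc, and `δ → 0` gives the claim.
-/

open Finset Matrix

/-- The cone `{A x + s | x, s ≥ 0}` is not known to be closed here, so separation only places `b`
in its closure; this is why the conclusion carries the slack `δ`. -/
theorem Matrix.exists_nonneg_mulVec_le_add {m n : Type*} [Fintype m] [Fintype n]
    (A : Matrix m n ℝ) (b : m → ℝ) (h : ∀ y, 0 ≤ y → 0 ≤ y ᵥ* A → 0 ≤ y ⬝ᵥ b)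
    {δ : ℝ} (hδ : 0 < δ) : ∃ x, 0 ≤ x ∧ ∀ i, (A *ᵥ x) i ≤ b i + δ := by
  classical
  let g : ((n → ℝ) × (m → ℝ)) →L[ℝ] (m → ℝ) :=
    LinearMap.toContinuousLinearMap (A.mulVecLin.coprod LinearMap.id)
  let C := (ProperCone.positive ℝ ((n → ℝ) × (m → ℝ))).map g
  have mem_C : ∀ x s, 0 ≤ x → 0 ≤ s → A *ᵥ x + s ∈ C := fun x s hx hs =>
    ProperCone.mem_map.2 <| PointedCone.mem_closure.2 <| subset_closure ⟨(x, s), ⟨hx, hs⟩, rfl⟩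
  have hb : b ∈ C := by
    by_contra hb
    obtain ⟨f, hfC, hfb⟩ := C.hyperplane_separation_point hb
    set y : m → ℝ := fun i => f (Pi.single i 1)
    have hf : ∀ z, f z = y ⬝ᵥ z := fun z => by
      conv_lhs => rw [pi_eq_sum_univ z]
      simp only [map_sum, map_smul, smul_eq_mul, dotProduct, y, mul_comm]
      refine sum_congr rfl fun i _ => ?_
      congr 2; funext j; simp [Pi.single_apply, eq_comm]
    refine hfb.not_ge (hf b ▸ h y (fun i => ?_) (fun j => ?_))
    · simpa using hfC _ (mem_C 0 (Pi.single i 1) le_rfl (Pi.single_nonneg.2 zero_le_one))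
    · have := hfC _ (mem_C (Pi.single j 1) 0 (Pi.single_nonneg.2 zero_le_one) le_rfl)
      rwa [hf, add_zero, dotProduct_mulVec, dotProduct_single, mul_one] at this
  obtain ⟨_, ⟨⟨x, s⟩, ⟨hx, hs⟩, rfl⟩, hdist⟩ :=
    Metric.mem_closure_iff.1 (PointedCone.mem_closure.1 (ProperCone.mem_map.1 hb)) δ hδ
  refine ⟨x, hx, fun i => ?_⟩
  have hi := (Real.dist_eq _ _ ▸ dist_le_pi_dist b (A *ᵥ x + s) i).trans_lt hdist
  have hsi : 0 ≤ s i := hs i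
  simp only [Pi.add_apply] at hi
  linarith [abs_lt.1 hi]

namespace Finset

variable {α : Type*} {s : Finset α} {r : α → ℝ}

lemma one_sub_prod_le_sum_one_sub (h0 : ∀ a ∈ s, 0 ≤ r a) (h1 : ∀ a ∈ s, r a ≤ 1) :
    1 - ∏ a ∈ s, r a ≤ ∑ a ∈ s, (1 - r a) := by
  classical
  induction s using Finset.induction_on with
  | empty => simp
  | insert a s ha ih =>
    simp only [mem_insert, forall_eq_or_imp] at h0 h1
    rw [prod_insert ha, sum_insert ha]
    have hprod := prod_le_one h0.2 h1.2
    nlinarith [ih h0.2 h1.2, mul_nonneg (sub_nonneg.2 h1.1) (sub_nonneg.2 hprod)]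

lemma prod_le_of_mem (h0 : ∀ a ∈ s, 0 ≤ r a) (h1 : ∀ a ∈ s, r a ≤ 1) {a : α} (ha : a ∈ s) :
    ∏ b ∈ s, r b ≤ r a := by
  classical
  rw [← mul_prod_erase s r ha]
  exact mul_le_of_le_one_right (h0 a ha)
    (prod_le_one (fun b hb => h0 b (mem_of_mem_erase hb)) fun b hb => h1 b (mem_of_mem_erase hb))

lemma one_le_sum_min_one (h0 : ∀ a ∈ s, 0 ≤ r a) (h : 1 ≤ ∑ a ∈ s, r a) :
    1 ≤ ∑ a ∈ s, min (r a) 1 := by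
  by_cases hbig : ∃ a ∈ s, 1 ≤ r a
  · obtain ⟨a, ha, h1⟩ := hbig
    calc 1 = min (r a) 1 := (min_eq_right h1).symm
      _ ≤ _ := single_le_sum (fun b hb => le_min (h0 b hb) zero_le_one) ha
  · push Not at hbig
    rwa [sum_congr rfl fun a ha => min_eq_left (hbig a ha).le]

open Classical in
lemma sum_ite_exists_eq_sum_comp {β : Type*} [Fintype β] {ψ : α → β} (hψ : Set.InjOn ψ s)
    (g : β → ℝ) : ∑ i, (if ∃ a ∈ s, ψ a = i then g i else 0) = ∑ a ∈ s, g (ψ a) := by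
  rw [← sum_filter, ← sum_image hψ]
  congr 1
  ext i
  simp

end Finset

section Copies

variable {V ι W : Type} {HA : Finset (W × W)} {src dst : ι → V}

lemma IsHCopy.mono {E E' : Finset ι} (hE : E ⊆ E') {φ : W → V} {ψ : W × W → ι}
    (h : IsHCopy HA src dst E φ ψ) : IsHCopy HA src dst E' φ ψ :=
  ⟨h.1, h.2.1, fun a ha => ⟨hE (h.2.2 a ha).1, (h.2.2 a ha).2⟩⟩

lemma IsCoverSet.insert_of_erase [DecidableEq ι] {E F : Finset ι} {e : ι}
    (hF : IsCoverSet HA src dst (E.erase e) F) : IsCoverSet HA src dst E (insert e F) := by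
  intro φ ψ h
  by_cases huse : ∃ a ∈ HA, ψ a = e
  · obtain ⟨a, ha, rfl⟩ := huse
    exact ⟨a, ha, mem_insert_self _ F⟩
  · push Not at huse
    have h' : IsHCopy HA src dst (E.erase e) φ ψ :=
      ⟨h.1, h.2.1, fun a ha => ⟨mem_erase.2 ⟨huse a ha, (h.2.2 a ha).1⟩, (h.2.2 a ha).2⟩⟩
    obtain ⟨a, ha, haF⟩ := hF φ ψ h'
    exact ⟨a, ha, mem_insert_of_mem haF⟩

variable [Fintype ι] {E : Finset ι} {w c : ι → ℝ}

/-- The optimality of `c` is tested against the fractional cover `min (y / y₀) 1`. -/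
lemma mul_coverValue_le_of_forall_isHCopy (hw : ∀ i, 0 ≤ w i)
    (hcopt : ∀ c', IsFracCover HA src dst E c' → coverValue E w c ≤ coverValue E w c')
    {y : ι → ℝ} (hy : 0 ≤ y) {y₀ : ℝ} (hy₀ : 0 ≤ y₀)
    (hcopy : ∀ φ ψ, IsHCopy HA src dst E φ ψ → y₀ ≤ ∑ a ∈ HA, y (ψ a)) :
    y₀ * coverValue E w c ≤ ∑ i, y i * w i := by
  rcases hy₀.eq_or_lt with rfl | hpos
  · simpa using sum_nonneg fun i _ => mul_nonneg (hy i) (hw i)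
  have hcover : IsFracCover HA src dst E fun i => min (y i / y₀) 1 :=
    ⟨fun i => ⟨le_min (div_nonneg (hy i) hpos.le) zero_le_one, min_le_right _ _⟩,
      fun φ ψ h => one_le_sum_min_one (fun a _ => div_nonneg (hy _) hpos.le)
        (by rw [← sum_div, one_le_div hpos]; exact hcopy φ ψ h)⟩
  calc y₀ * coverValue E w c ≤ y₀ * coverValue E w fun i => min (y i / y₀) 1 :=
        mul_le_mul_of_nonneg_left (hcopt _ hcover) hpos.le
    _ ≤ y₀ * ∑ i, w i * (y i / y₀) := by
        refine mul_le_mul_of_nonneg_left ?_ hpos.le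
        calc coverValue E w (fun i => min (y i / y₀) 1) ≤ ∑ i ∈ E, w i * (y i / y₀) :=
              sum_le_sum fun i _ => mul_le_mul_of_nonneg_left (min_le_left _ _) (hw i)
          _ ≤ ∑ i, w i * (y i / y₀) := sum_le_univ_sum_of_nonneg fun i =>
              mul_nonneg (hw i) (div_nonneg (hy i) hpos.le)
    _ = ∑ i, y i * w i := by
        rw [mul_sum]
        exact sum_congr rfl fun i _ => by field_simp

open Classical in
/-- The packing LP as `A m ≤ (w, -t)`: one row per arc capacity, and a last row `-∑ m`.
Columns of non-copies vanish. -/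
noncomputable def packingMatrix (HA : Finset (W × W)) (src dst : ι → V) (E : Finset ι) :
    Matrix (ι ⊕ Unit) ((W → V) × (W × W → ι)) ℝ :=
  Matrix.of fun r p =>
    if IsHCopy HA src dst E p.1 p.2 then
      Sum.elim (fun i => if ∃ a ∈ HA, p.2 a = i then 1 else 0) (fun _ => -1) r
    else 0

lemma dotProduct_nonneg_of_vecMul_packingMatrix_nonneg (hw : ∀ i, 0 ≤ w i)
    (hcopt : ∀ c', IsFracCover HA src dst E c' → coverValue E w c ≤ coverValue E w c')
    {y : ι ⊕ Unit → ℝ} (hy : 0 ≤ y) (hyA : 0 ≤ y ᵥ* packingMatrix HA src dst E) :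
    0 ≤ y ⬝ᵥ Sum.elim w fun _ => -coverValue E w c := by
  have key := mul_coverValue_le_of_forall_isHCopy hw hcopt (y := fun i => y (.inl i))
    (fun i => hy _) (hy (.inr ())) fun φ ψ h => by
      have := hyA (φ, ψ)
      simp only [vecMul, dotProduct, Fintype.sum_sum_type, packingMatrix, Matrix.of_apply,
        if_pos h, Sum.elim_inl, Sum.elim_inr, mul_ite, mul_one, mul_zero, Fintype.sum_unique,
        Pi.zero_apply, mul_neg] at this
      rw [sum_ite_exists_eq_sum_comp h.2.1] at this
      linarith
  have hyb : y ⬝ᵥ Sum.elim w (fun _ => -coverValue E w c)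
      = ∑ i, y (.inl i) * w i - y (.inr ()) * coverValue E w c := by
    simp [dotProduct, Fintype.sum_sum_type]
    ring
  linarith

end Copies

section Packings

variable {V ι W : Type} [Fintype V] [Fintype ι] [Fintype W] [DecidableEq W]

open Classical in
/-- Stated with the classical instance, so that `load HA m i ≤ w i` is literally the arc constraint
of `IsFracPacking`. -/
noncomputable def load (HA : Finset (W × W)) (m : (W → V) × (W × W → ι) → ℝ) (i : ι) : ℝ :=
  ∑ p, if ∃ a ∈ HA, p.2 a = i then m p else 0

variable {HA : Finset (W × W)} {src dst : ι → V} {E : Finset ι} {w c : ι → ℝ}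
  {m : (W → V) × (W × W → ι) → ℝ}

lemma load_eq_zero_of_notMem (hm : ∀ p, ¬ IsHCopy HA src dst E p.1 p.2 → m p = 0) {i : ι}
    (hi : i ∉ E) : load HA m i = 0 := by
  refine sum_eq_zero fun p _ => ?_
  split_ifs with huse
  · obtain ⟨a, ha, rfl⟩ := huse
    by_contra hp
    exact hi ((not_not.1 (mt (hm p) hp)).2.2 a ha).1
  · rfl

lemma sum_mul_sum_eq_sum_mul_load (hm : ∀ p, ¬ IsHCopy HA src dst E p.1 p.2 → m p = 0)
    (g : ι → ℝ) : ∑ p, m p * ∑ a ∈ HA, g (p.2 a) = ∑ i, g i * load HA m i := by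
  classical
  have hp : ∀ p, m p * ∑ a ∈ HA, g (p.2 a)
      = ∑ i, if ∃ a ∈ HA, p.2 a = i then g i * m p else 0 := fun p => by
    by_cases hcopy : IsHCopy HA src dst E p.1 p.2
    · rw [sum_ite_exists_eq_sum_comp hcopy.2.1, mul_sum]
      exact sum_congr rfl fun _ _ => mul_comm _ _
    · simp [hm p hcopy]
  simp only [hp, load, mul_sum]
  rw [sum_comm]
  refine sum_congr rfl fun i _ => sum_congr rfl fun p _ => ?_
  split_ifs <;> simp

lemma packingValue_le_coverValue (hc0 : ∀ i, 0 ≤ c i)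
    (hcov : ∀ φ ψ, IsHCopy HA src dst E φ ψ → 1 ≤ ∑ a ∈ HA, c (ψ a))
    (hm : IsFracPacking HA src dst E w m) : packingValue m ≤ coverValue E w c := by
  obtain ⟨hm0, hmE, hload⟩ := hm
  calc packingValue m ≤ ∑ p, m p * ∑ a ∈ HA, c (p.2 a) := sum_le_sum fun p _ => by
        by_cases hp : IsHCopy HA src dst E p.1 p.2
        · exact le_mul_of_one_le_right (hm0 p) (hcov _ _ hp)
        · simp [hmE p hp]
    _ = ∑ i, c i * load HA m i := sum_mul_sum_eq_sum_mul_load hmE c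
    _ = ∑ i ∈ E, c i * load HA m i := (sum_subset (subset_univ E) fun i _ hi => by
        rw [load_eq_zero_of_notMem hmE hi, mul_zero]).symm
    _ ≤ coverValue E w c := sum_le_sum fun i hi => by
        rw [mul_comm (w i)]
        exact mul_le_mul_of_nonneg_left (hload i hi) (hc0 i)

noncomputable def scaleCopies (HA : Finset (W × W)) (r : ι → ℝ)
    (m : (W → V) × (W × W → ι) → ℝ) (p : (W → V) × (W × W → ι)) : ℝ :=
  m p * ∏ a ∈ HA, r (p.2 a)

lemma load_scaleCopies_le {r : ι → ℝ} (hr0 : ∀ i, 0 ≤ r i) (hr1 : ∀ i, r i ≤ 1)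
    (hm0 : ∀ p, 0 ≤ m p) (i : ι) : load HA (scaleCopies HA r m) i ≤ r i * load HA m i := by
  simp only [load, scaleCopies, mul_sum, mul_ite, mul_zero]
  refine sum_le_sum fun p _ => ?_
  split_ifs with huse
  · obtain ⟨a, ha, rfl⟩ := huse
    rw [mul_comm (m p)]
    exact mul_le_mul_of_nonneg_right
      (prod_le_of_mem (fun b _ => hr0 _) (fun b _ => hr1 _) ha) (hm0 p)
  · rfl

lemma packingValue_sub_scaleCopies_le {r : ι → ℝ} (hr0 : ∀ i, 0 ≤ r i) (hr1 : ∀ i, r i ≤ 1)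
    (hm0 : ∀ p, 0 ≤ m p) (hmE : ∀ p, ¬ IsHCopy HA src dst E p.1 p.2 → m p = 0) :
    packingValue m - packingValue (scaleCopies HA r m) ≤ ∑ i, (1 - r i) * load HA m i := by
  rw [← sum_mul_sum_eq_sum_mul_load hmE, packingValue, packingValue, ← sum_sub_distrib]
  refine sum_le_sum fun p _ => ?_
  rw [scaleCopies, ← mul_one_sub]
  exact mul_le_mul_of_nonneg_left
    (one_sub_prod_le_sum_one_sub (fun a _ => hr0 _) fun a _ => hr1 _) (hm0 p)

lemma exists_isFracPacking_of_load_le (hw : ∀ i, 0 ≤ w i) (hm0 : ∀ p, 0 ≤ m p)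
    (hmE : ∀ p, ¬ IsHCopy HA src dst E p.1 p.2 → m p = 0)
    {δ : ℝ} (hδ : 0 < δ) (hload : ∀ i, load HA m i ≤ w i + δ) :
    ∃ m', IsFracPacking HA src dst E w m' ∧
      packingValue m - Fintype.card ι * δ ≤ packingValue m' := by
  set r : ι → ℝ := fun i => w i / (w i + δ)
  have hwδ : ∀ i, 0 < w i + δ := fun i => by linarith [hw i]
  have hr0 : ∀ i, 0 ≤ r i := fun i => div_nonneg (hw i) (hwδ i).le
  have hr1 : ∀ i, r i ≤ 1 := fun i => (div_le_one (hwδ i)).2 (by linarith)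
  have hrload : ∀ i, r i * (w i + δ) = w i := fun i => div_mul_cancel₀ _ (hwδ i).ne'
  refine ⟨scaleCopies HA r m, ⟨fun p => mul_nonneg (hm0 p) (prod_nonneg fun a _ => hr0 _),
    fun p hp => by simp [scaleCopies, hmE p hp], fun i _ => ?_⟩, ?_⟩
  · calc load HA (scaleCopies HA r m) i ≤ r i * load HA m i := load_scaleCopies_le hr0 hr1 hm0 i
      _ ≤ r i * (w i + δ) := mul_le_mul_of_nonneg_left (hload i) (hr0 i)
      _ = w i := hrload i
  · have hloss : ∀ i, (1 - r i) * load HA m i ≤ δ := fun i => by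
      calc (1 - r i) * load HA m i ≤ (1 - r i) * (w i + δ) :=
            mul_le_mul_of_nonneg_left (hload i) (sub_nonneg.2 (hr1 i))
        _ = δ := by rw [sub_mul, one_mul, hrload]; ring
    have := (packingValue_sub_scaleCopies_le hr0 hr1 hm0 hmE).trans
      (sum_le_sum fun i (_ : i ∈ univ) => hloss i)
    rw [sum_const, card_univ, nsmul_eq_mul] at this
    linarith

open Classical in
lemma mulVec_packingMatrix_inl (x : (W → V) × (W × W → ι) → ℝ) (i : ι) :
    (packingMatrix HA src dst E *ᵥ x) (.inl i)
      = load HA (fun p => if IsHCopy HA src dst E p.1 p.2 then x p else 0) i := by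
  simp only [load, mulVec, dotProduct, packingMatrix, Matrix.of_apply, Sum.elim_inl]
  refine sum_congr rfl fun p _ => ?_
  by_cases hp : IsHCopy HA src dst E p.1 p.2 <;> by_cases hu : ∃ a ∈ HA, p.2 a = i <;>
    simp [hp, hu]

open Classical in
lemma mulVec_packingMatrix_inr (x : (W → V) × (W × W → ι) → ℝ) :
    (packingMatrix HA src dst E *ᵥ x) (.inr ())
      = -packingValue (fun p => if IsHCopy HA src dst E p.1 p.2 then x p else 0) := by
  simp only [mulVec, dotProduct, packingMatrix, Matrix.of_apply, Sum.elim_inr, packingValue,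
    ← sum_neg_distrib]
  exact sum_congr rfl fun p _ => by split_ifs <;> simp

lemma exists_isFracPacking_ge_sub (hw : ∀ i, 0 ≤ w i)
    (hcopt : ∀ c', IsFracCover HA src dst E c' → coverValue E w c ≤ coverValue E w c')
    {ε : ℝ} (hε : 0 < ε) :
    ∃ m, IsFracPacking HA src dst E w m ∧ coverValue E w c - ε ≤ packingValue m := by
  classical
  set δ := ε / (Fintype.card ι + 1)
  have hδ : 0 < δ := by positivity
  obtain ⟨x, hx, hAx⟩ := exists_nonneg_mulVec_le_add _ _
    (fun y hy hyA => dotProduct_nonneg_of_vecMul_packingMatrix_nonneg hw hcopt hy hyA) hδ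
  have hload := fun i => (mulVec_packingMatrix_inl x i).symm.trans_le (hAx (.inl i))
  have hval := (mulVec_packingMatrix_inr x).symm.trans_le (hAx (.inr ()))
  obtain ⟨m', hm', hm'v⟩ := exists_isFracPacking_of_load_le hw
    (fun p => by by_cases hp : IsHCopy HA src dst E p.1 p.2 <;> simp [hp]; exact hx p)
    (fun p hp => if_neg hp) hδ hload
  have hεδ : (Fintype.card ι + 1) * δ = ε := mul_div_cancel₀ _ (by positivity)
  simp only [Sum.elim_inr] at hval
  exact ⟨m', hm', by linarith⟩

end Packings

theorem stmt_10_general {V ι W : Type} [Fintype V] [Fintype ι] [Fintype W]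
    [DecidableEq W] [DecidableEq ι]
    (HA : Finset (W × W)) (src dst : ι → V) (E : Finset ι) (w : ι → ℝ)
    (hw : ∀ i, 0 ≤ w i) (α : ℝ) (hα : 0 < α)
    (c : ι → ℝ) (hc : IsFracCover HA src dst E c)
    (hcopt : ∀ c', IsFracCover HA src dst E c' → coverValue E w c ≤ coverValue E w c')
    (e : ι) (he : e ∈ E) (hce : α ≤ c e)
    (ν νe : ℝ)
    (hν : IsGreatest {x | ∃ m : (W → V) × (W × W → ι) → ℝ,
      IsFracPacking HA src dst E w m ∧ x = packingValue m} ν)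
    (hνe : IsGreatest {x | ∃ m : (W → V) × (W × W → ι) → ℝ,
      IsFracPacking HA src dst (E.erase e) w m ∧ x = packingValue m} νe)
    (hτe : ∃ F ⊆ E.erase e, IsCoverSet HA src dst (E.erase e) F ∧
      ∑ i ∈ F, w i ≤ α⁻¹ * νe) :
    ∃ F ⊆ E, IsCoverSet HA src dst E F ∧ ∑ i ∈ F, w i ≤ α⁻¹ * ν := by
  obtain ⟨F, hFsub, hFcov, hFw⟩ := hτe
  have heF : e ∉ F := fun h => (mem_erase.1 (hFsub h)).1 rfl
  refine ⟨insert e F, insert_subset he (hFsub.trans (erase_subset e E)),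
    hFcov.insert_of_erase, ?_⟩
  have hν_ge : coverValue E w c ≤ ν := le_of_forall_pos_le_add fun ε hε => by
    obtain ⟨m, hm, hmv⟩ := exists_isFracPacking_ge_sub hw hcopt hε
    linarith [hν.2 ⟨m, hm, rfl⟩]
  have hνe_le : νe ≤ coverValue E w c - w e * c e := by
    obtain ⟨m, hm, rfl⟩ := hνe.1
    rw [coverValue, ← sum_erase_eq_sub he]
    exact packingValue_le_coverValue (fun i => (hc.1 i).1)
      (fun φ ψ h => hc.2 φ ψ (h.mono (erase_subset e E))) hm
  have hwe : α * w e ≤ w e * c e := by nlinarith [hw e]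
  calc ∑ i ∈ insert e F, w i = w e + ∑ i ∈ F, w i := sum_insert heF
    _ ≤ α⁻¹ * (α * w e) + α⁻¹ * νe := by rw [inv_mul_cancel_left₀ hα.ne']; linarith
    _ = α⁻¹ * (α * w e + νe) := by ring
    _ ≤ α⁻¹ * ν := mul_le_mul_of_nonneg_left (by linarith) (inv_nonneg.2 hα.le)

/-- If `c` is an optimal fractional `H`-cover of `D`, `α > 0`, `e` is an arc with
`c(e) ≥ α`, and `τ_H(D \ e) ≤ α⁻¹ ν*_H(D \ e)`, then `τ_H(D) ≤ α⁻¹ ν*_H(D)`.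
Here `ν` and `νe` denote `ν*_H(D)` and `ν*_H(D \ e)` (maximum fractional packing
values), and the `τ` inequalities are expressed by exhibiting integral covers. -/
theorem stmt_10 {V ι W : Type} [Fintype V] [Fintype ι] [Fintype W]
    [DecidableEq W] [DecidableEq ι] [DecidableEq V]
    (HA : Finset (W × W)) (src dst : ι → V) (E : Finset ι) (w : ι → ℝ)
    (hw : ∀ i, 0 ≤ w i) (α : ℝ) (hα : 0 < α)
    (c : ι → ℝ) (hc : IsFracCover HA src dst E c)
    (hcopt : ∀ c', IsFracCover HA src dst E c' → coverValue E w c ≤ coverValue E w c')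
    (e : ι) (he : e ∈ E) (hce : α ≤ c e)
    (ν νe : ℝ)
    (hν : IsGreatest {x | ∃ m : (W → V) × (W × W → ι) → ℝ,
      IsFracPacking HA src dst E w m ∧ x = packingValue m} ν)
    (hνe : IsGreatest {x | ∃ m : (W → V) × (W × W → ι) → ℝ,
      IsFracPacking HA src dst (E.erase e) w m ∧ x = packingValue m} νe)
    (hτe : ∃ F ⊆ E.erase e, IsCoverSet HA src dst (E.erase e) F ∧
      ∑ i ∈ F, w i ≤ α⁻¹ * νe) :
    ∃ F ⊆ E, IsCoverSet HA src dst E F ∧ ∑ i ∈ F, w i ≤ α⁻¹ * ν :=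
  stmt_10_general HA src dst E w hw α hα c hc hcopt e he hce ν νe hν hνe hτe
end

section
/- Let H be a directed graph with at least two arcs, L a nonempty directed graph on vertex set [r], and α = 1/(|E(H)| − disc_H(L)). Let D be an arc-weighted directed multigraph with a fractional H-cover c satisfying c(e) < α for every arc e. Let V_1,...,V_r partition V(D), and let F be the set of arcs e = (x,y) with c(e) > 0 such that if x ∈ V_i and y ∈ V_j then (i,j) ∉ E(L). Then every copy of H in D contains an arc of F. -/
/-- The blowup `B(L)` of `L` (arc set `LA` on `Fin r`) together with an added arc
set `F` contains a copy of `H`. The blowup has vertex set `Fin r × ℕ` and all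
arcs from `I_i` to `I_j` whenever `(i,j) ∈ LA`. -/
def BlowupCopy {W : Type} (r : ℕ) (LA : Finset (Fin r × Fin r)) (HA : Finset (W × W))
    (F : Finset ((Fin r × ℕ) × (Fin r × ℕ))) : Prop :=
  ∃ φ : W → Fin r × ℕ, Function.Injective φ ∧
    ∀ a ∈ HA, ((φ a.1).1, (φ a.2).1) ∈ LA ∨ (φ a.1, φ a.2) ∈ F

/-- Let `H` have at least two arcs, `L` be a nonempty directed graph on `[r]`,
`d = disc_H(L)` and `α = 1/(|E(H)| − d)`. Let `D` be an arc-weighted directed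
multigraph with a fractional `H`-cover `c` satisfying `c(e) < α` on every arc.
Given a partition `V_1, …, V_r` of `V(D)` (encoded by `part : V → Fin r`), the set
`F` of arcs `e = (x,y)` with `c(e) > 0` such that `(part x, part y) ∉ E(L)`
meets every copy of `H` in `D`. -/
theorem stmt_11 {V ι W : Type} [Fintype W] [DecidableEq W]
    (r : ℕ) (hr : 0 < r) (LA : Finset (Fin r × Fin r)) (hLne : LA.Nonempty)
    (hLloop : ∀ i : Fin r, (i, i) ∉ LA)
    (HA : Finset (W × W)) (hH2 : 2 ≤ HA.card) (hHloop : ∀ x : W, (x, x) ∉ HA)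
    (d : ℕ) (hd : IsLeast {m | ∃ F : Finset ((Fin r × ℕ) × (Fin r × ℕ)),
      F.card = m ∧ BlowupCopy r LA HA F} d)
    (src dst : ι → V) (E : Finset ι)
    (α : ℝ) (hαdef : α = 1 / ((HA.card : ℝ) - (d : ℝ)))
    (c : ι → ℝ) (hc : IsFracCover HA src dst E c) (hcα : ∀ i ∈ E, c i < α)
    (part : V → Fin r) (F : Finset ι)
    (hF : ∀ i : ι, i ∈ F ↔ i ∈ E ∧ 0 < c i ∧ (part (src i), part (dst i)) ∉ LA) :
    ∀ φ ψ, IsHCopy HA src dst E φ ψ → ∃ a ∈ HA, ψ a ∈ F := by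
  classical
  intro φ ψ hcopy
  by_contra hcon
  push_neg at hcon
  obtain ⟨hφinj, hψinj, hψ⟩ := hcopy
  set idx : W → ℕ := fun w => (Fintype.equivFin W w : ℕ) with hidx
  have idxinj : Function.Injective idx := fun a b h =>
    (Fintype.equivFin W).injective (Fin.val_injective h)
  -- Step 1 : d < HA.card
  have hd1 : d < HA.card := by
    obtain ⟨⟨i, j⟩, hij⟩ := hLne
    obtain ⟨⟨u, v⟩, huv⟩ := Finset.card_pos.mp (by omega : 0 < HA.card)
    have huvne : u ≠ v := fun h => hHloop v (h ▸ huv)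
    set φ0 : W → Fin r × ℕ := fun w => (if w = v then j else i, idx w) with hφ0def
    have hφ0 : Function.Injective φ0 := fun a b h => idxinj (congrArg Prod.snd h)
    set F0 : Finset ((Fin r × ℕ) × (Fin r × ℕ)) :=
      (HA.erase (u, v)).image (fun a => (φ0 a.1, φ0 a.2)) with hF0def
    have hbc : BlowupCopy r LA HA F0 := by
      refine ⟨φ0, hφ0, fun a ha => ?_⟩
      by_cases h : a = (u, v)
      · left
        subst h
        simp only [hφ0def, huvne, if_neg huvne, if_pos rfl]
        exact hij
      · right
        exact Finset.mem_image.mpr ⟨a, Finset.mem_erase.mpr ⟨h, ha⟩, rfl⟩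
    have hdle : d ≤ F0.card := hd.2 ⟨F0, rfl, hbc⟩
    have h1 : F0.card ≤ (HA.erase (u, v)).card := Finset.card_image_le
    have h2 : (HA.erase (u, v)).card = HA.card - 1 := Finset.card_erase_of_mem huv
    omega
  -- Step 2 : arcs of the copy not respecting L have weight 0, and there are ≥ d of them
  set S : Finset (W × W) := HA.filter (fun a => (part (φ a.1), part (φ a.2)) ∉ LA) with hSdef
  have hSsub : S ⊆ HA := Finset.filter_subset _ _
  have hczero : ∀ a ∈ S, c (ψ a) = 0 := by
    intro a ha
    rw [hSdef, Finset.mem_filter] at ha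
    obtain ⟨haH, hnotL⟩ := ha
    obtain ⟨hE, hsrc, hdst⟩ := hψ a haH
    have hnF := hcon a haH
    rw [hF] at hnF
    push_neg at hnF
    have h0 := (hc.1 (ψ a)).1
    by_contra hne
    have hpos : 0 < c (ψ a) := lt_of_le_of_ne h0 (Ne.symm hne)
    have := hnF hE hpos
    rw [hsrc, hdst] at this
    exact hnotL this
  have hdS : d ≤ S.card := by
    set φ1 : W → Fin r × ℕ := fun w => (part (φ w), idx w) with hφ1def
    have hφ1 : Function.Injective φ1 := fun a b h => idxinj (congrArg Prod.snd h)
    set F1 : Finset ((Fin r × ℕ) × (Fin r × ℕ)) :=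
      S.image (fun a => (φ1 a.1, φ1 a.2)) with hF1def
    have hbc : BlowupCopy r LA HA F1 := by
      refine ⟨φ1, hφ1, fun a ha => ?_⟩
      by_cases h : (part (φ a.1), part (φ a.2)) ∈ LA
      · left; exact h
      · right
        exact Finset.mem_image.mpr ⟨a, Finset.mem_filter.mpr ⟨ha, h⟩, rfl⟩
    have hdle : d ≤ F1.card := hd.2 ⟨F1, rfl, hbc⟩
    exact hdle.trans Finset.card_image_le
  -- Step 3 : derive the contradiction from the cover inequality
  have hαpos : 0 < α := by
    rw [hαdef]
    apply div_pos one_pos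
    have : (d : ℝ) + 1 ≤ (HA.card : ℝ) := by exact_mod_cast hd1
    linarith
  have hsum : 1 ≤ ∑ a ∈ HA, c (ψ a) := hc.2 φ ψ ⟨hφinj, hψinj, hψ⟩
  have hsplit : ∑ a ∈ HA \ S, c (ψ a) + ∑ a ∈ S, c (ψ a) = ∑ a ∈ HA, c (ψ a) :=
    Finset.sum_sdiff hSsub
  have hSzero : ∑ a ∈ S, c (ψ a) = 0 := Finset.sum_eq_zero hczero
  have hsum' : 1 ≤ ∑ a ∈ HA \ S, c (ψ a) := by linarith
  by_cases hne : (HA \ S).Nonempty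
  · have hlt : ∑ a ∈ HA \ S, c (ψ a) < ∑ _a ∈ HA \ S, α :=
      Finset.sum_lt_sum_of_nonempty hne
        (fun a ha => hcα (ψ a) (hψ a (Finset.mem_sdiff.mp ha).1).1)
    rw [Finset.sum_const, nsmul_eq_mul] at hlt
    have hcard : (HA \ S).card ≤ HA.card - d := by
      rw [Finset.card_sdiff_of_subset hSsub]
      omega
    have hmul : ((HA \ S).card : ℝ) * α ≤ ((HA.card - d : ℕ) : ℝ) * α := by
      apply mul_le_mul_of_nonneg_right _ hαpos.le
      exact_mod_cast hcard
    have hcast : ((HA.card - d : ℕ) : ℝ) = (HA.card : ℝ) - (d : ℝ) := by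
      rw [Nat.cast_sub hd1.le]
    have hne0 : (HA.card : ℝ) - (d : ℝ) ≠ 0 := by
      have : (d : ℝ) + 1 ≤ (HA.card : ℝ) := by exact_mod_cast hd1
      linarith
    have heq : ((HA.card - d : ℕ) : ℝ) * α = 1 := by
      rw [hcast, hαdef]
      field_simp
    linarith
  · rw [Finset.not_nonempty_iff_eq_empty] at hne
    rw [hne, Finset.sum_empty] at hsum'
    linarith
end

section
/- Let H be a directed graph with at least two arcs. If H contains no directed path of length 2 and no directed cycle of length 2, then for every nonempty directed graph L, disc_H(L) = 0, i.e., the blowup B(L) of any nonempty L contains a copy of H. -/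
/-- If a directed graph `H` with at least two arcs contains no directed path of
length 2 and no directed 2-cycle, then for every nonempty loopless directed graph
`L` (arc set `LA` on `Fin r`), the blowup `B(L)` (vertex set `Fin r × ℕ`, all arcs
from `I_i` to `I_j` for `(i,j) ∈ E(L)`) contains a copy of `H`;
that is, `disc_H(L) = 0`. -/
theorem stmt_13 {W : Type} [Fintype W] [DecidableEq W] (HA : Finset (W × W))
    (hH2 : 2 ≤ HA.card) (hHloop : ∀ x : W, (x, x) ∉ HA)
    (hP2 : ¬ ∃ u v w : W, u ≠ v ∧ v ≠ w ∧ (u, v) ∈ HA ∧ (v, w) ∈ HA)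
    (hC2 : ¬ ∃ u v : W, (u, v) ∈ HA ∧ (v, u) ∈ HA)
    (r : ℕ) (LA : Finset (Fin r × Fin r))
    (hLloop : ∀ i : Fin r, (i, i) ∉ LA) (hLne : LA.Nonempty) :
    ∃ φ : W → Fin r × ℕ, Function.Injective φ ∧
      ∀ a ∈ HA, ((φ a.1).1, (φ a.2).1) ∈ LA := by
  classical
  obtain ⟨⟨i, j⟩, hij⟩ := hLne
  refine ⟨fun w => (if ∃ x, (w, x) ∈ HA then i else j, (Fintype.equivFin W w : ℕ)), ?_, ?_⟩
  · intro a b h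
    have h2 := congrArg Prod.snd h
    simp only [Fin.val_inj] at h2
    exact (Fintype.equivFin W).injective h2
  · rintro ⟨a, b⟩ hab
    simp only
    rw [if_pos ⟨b, hab⟩, if_neg]
    · exact hij
    · rintro ⟨c, hc⟩
      by_cases hca : c = a
      · exact hC2 ⟨a, b, hab, hca ▸ hc⟩
      · refine hP2 ⟨a, b, c, ?_, ?_, hab, hc⟩
        · rintro rfl; exact hHloop a hab
        · rintro rfl; exact hHloop b hc
end

section
/- Let k ≥ 4 with k ≠ 5, and let L be any nonempty loopless directed graph on r vertices. Then f(C_k, L) ≥ 2k/3, where f(C_k, L) = max{ k(1 − |E(L)|/r²), k − disc_{C_k}(L) }. Specifically: if L contains a directed 2-cycle then f(C_k,L) = k; if L is an orientation containing a directed path of length 3 then disc_{C_k}(L) ≤ ⌈k/4⌉ and hence f(C_k,L) ≥ k − ⌈k/4⌉ ≥ 2k/3; otherwise the underlying undirected graph of L is K_4-free, so |E(L)| ≤ r²/3 and f(C_k,L) ≥ 2k/3. -/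
/-!
If `L` has a directed walk `a → b → c → u` (a 2-cycle gives one), wrap the periodic sequence
`a, b, c, u, a, b, …` around a `k`-cycle in the blowup, using a new copy of a class at every
position. Only the arcs leaving a `u` and the closing arc can be missing, so at most `⌈k/4⌉` arcs
are added, and `3 ⌈k/4⌉ ≤ k` for `k ≥ 4`, `k ≠ 5`.

Otherwise no arc starts at a vertex with an in-arc and ends at a vertex with an out-arc. Splitting
the vertices into pure sources `P`, vertices with both kinds of arcs `M`, and pure sinks `Q`,
every arc goes `P → M`, `P → Q` or `M → Q`, so `|E(L)| ≤ pm + pq + mq ≤ (p + q + m)² / 3`.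
-/

open Finset

section Blowup

variable {α : Type*} (L : Finset (α × α)) (k : ℕ)

/-- The numbers `m` such that adding some `m` arcs to the blowup of `L` (vertex set `α × ℕ`)
creates a directed `k`-cycle; `disc_{C_k}(L)` is its least element. -/
def cycleCompletionCosts : Set ℕ :=
  {m | ∃ F : Finset ((α × ℕ) × (α × ℕ)), F.card = m ∧
    ∃ v : ZMod k → α × ℕ, Function.Injective v ∧
      ∀ i : ZMod k, ((v i).1, (v (i + 1)).1) ∈ L ∨ (v i, v (i + 1)) ∈ F}

variable [DecidableEq α] [NeZero k]

lemma card_filter_notMem_mem_cycleCompletionCosts (w : ZMod k → α) :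
    #{i | (w i, w (i + 1)) ∉ L} ∈ cycleCompletionCosts L k := by
  set v : ZMod k → α × ℕ := fun i => (w i, i.val)
  have hv : Function.Injective v := fun i j h => ZMod.val_injective k (congrArg Prod.snd h)
  refine ⟨({i | (w i, w (i + 1)) ∉ L} : Finset _).image fun i => (v i, v (i + 1)),
    card_image_of_injective _ fun i j h => hv (Prod.mk.inj h).1, v, hv, fun i => ?_⟩
  by_cases hi : (w i, w (i + 1)) ∈ L
  · exact Or.inl hi
  · exact Or.inr (mem_image_of_mem _ (by simpa using hi))

lemma card_filter_notMem_periodic_le (p : ℕ → α) (hp : ∀ j < 3, (p j, p (j + 1)) ∈ L) :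
    #{i : ZMod k | (p (i.val % 4), p ((i + 1).val % 4)) ∉ L} ≤ (k + 3) / 4 := by
  have hk := NeZero.pos k
  have hbad : ∀ i : ZMod k, (p (i.val % 4), p ((i + 1).val % 4)) ∉ L →
      i.val % 4 = 3 ∨ i.val = k - 1 := by
    intro i hi
    by_contra! h
    have hlt : i.val + 1 < k := by
      have := ZMod.val_lt i
      omega
    have h1 : (1 : ZMod k).val = 1 := ZMod.val_one'' (by omega)
    have hsucc : (i + 1).val = i.val + 1 := h1 ▸ ZMod.val_add_of_lt (h1 ▸ hlt)
    have hmod : (i.val + 1) % 4 = i.val % 4 + 1 := by omega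
    exact hi (hsucc ▸ hmod ▸ hp _ (by omega))
  -- distinct bad positions lie in distinct blocks `[4q, 4q + 3]`
  calc #{i : ZMod k | (p (i.val % 4), p ((i + 1).val % 4)) ∉ L}
      ≤ #(range ((k + 3) / 4)) := by
        refine card_le_card_of_injOn (fun i => i.val / 4) (fun i hi => ?_) fun i hi j hj hij => ?_
        · have := ZMod.val_lt i
          simp only [coe_range, Set.mem_Iio]
          omega
        · have := ZMod.val_lt i
          have := ZMod.val_lt j
          have := hbad i (mem_filter.mp hi).2
          have := hbad j (mem_filter.mp hj).2
          exact ZMod.val_injective k (by simp only at hij; omega)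
    _ = (k + 3) / 4 := card_range _

variable {L k}

theorem three_mul_le_of_isLeast_of_walk (hk : 4 ≤ k) (hk5 : k ≠ 5) {d : ℕ}
    (hd : IsLeast (cycleCompletionCosts L k) d) {a b c u : α}
    (hab : (a, b) ∈ L) (hbc : (b, c) ∈ L) (hcu : (c, u) ∈ L) : 3 * d ≤ k := by
  set p : ℕ → α := fun j => [a, b, c, u].getD j a
  have hp : ∀ j < 3, (p j, p (j + 1)) ∈ L := by
    intro j hj
    interval_cases j <;> assumption
  have := (hd.2 (card_filter_notMem_mem_cycleCompletionCosts L k fun i => p (i.val % 4))).trans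
    (card_filter_notMem_periodic_le L k p hp)
  omega

end Blowup

theorem three_mul_card_le_sq_of_forall_not_walk {α : Type*} [Fintype α] [DecidableEq α]
    {L : Finset (α × α)} (hL : ∀ a b c u, (a, b) ∈ L → (b, c) ∈ L → (c, u) ∈ L → False) :
    3 * #L ≤ Fintype.card α ^ 2 := by
  set O := ({x | ∃ y, (x, y) ∈ L} : Finset α)
  set I := ({y | ∃ x, (x, y) ∈ L} : Finset α)
  have hsub : L ⊆ (O \ I) ×ˢ I ∪ (O ∩ I) ×ˢ (I \ O) := by
    rintro ⟨x, y⟩ hxy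
    have hx : x ∈ O := by simpa [O] using ⟨y, hxy⟩
    have hy : y ∈ I := by simpa [I] using ⟨x, hxy⟩
    simp only [mem_union, mem_product, mem_sdiff, mem_inter]
    by_cases hxI : x ∈ I
    · by_cases hyO : y ∈ O
      · obtain ⟨z, hz⟩ := by simpa [I] using hxI
        obtain ⟨t, ht⟩ := by simpa [O] using hyO
        exact (hL z x y t hz hxy ht).elim
      · exact Or.inr ⟨⟨hx, hxI⟩, hy, hyO⟩
    · exact Or.inl ⟨⟨hx, hxI⟩, hy⟩
  have hO := card_sdiff_add_card_inter O I
  have hI := card_sdiff_add_card_inter I O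
  have hOI := card_union_add_card_inter O I
  have hn := card_le_univ (O ∪ I)
  rw [inter_comm I O] at hI
  have hLle : #L ≤ #(O \ I) * #I + #(O ∩ I) * #(I \ O) :=
    (card_le_card hsub).trans <| (card_union_le _ _).trans_eq <| by rw [card_product, card_product]
  set p := #(O \ I)
  set q := #(I \ O)
  set m := #(O ∩ I)
  have hpqm : p + q + m ≤ Fintype.card α := by omega
  calc 3 * #L ≤ 3 * (p * q + p * m + m * q) := by rw [← hI] at hLle; linarith
    _ ≤ (p + q + m) ^ 2 := by
        nlinarith [two_mul_le_add_sq p q, two_mul_le_add_sq p m, two_mul_le_add_sq m q]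
    _ ≤ Fintype.card α ^ 2 := Nat.pow_le_pow_left hpqm 2

theorem stmt_19_general (k r : ℕ) (hk : 4 ≤ k) (hk5 : k ≠ 5)
    (LA : Finset (Fin r × Fin r))
    (d : ℕ)
    (hd : IsLeast {m | ∃ F : Finset ((Fin r × ℕ) × (Fin r × ℕ)), F.card = m ∧
      ∃ v : ZMod k → Fin r × ℕ, Function.Injective v ∧
        ∀ i : ZMod k, ((v i).1, (v (i + 1)).1) ∈ LA ∨ (v i, v (i + 1)) ∈ F} d) :
    (2 * (k : ℝ)) / 3 ≤
      max ((k : ℝ) * (1 - (LA.card : ℝ) / (r : ℝ) ^ 2)) ((k : ℝ) - (d : ℝ)) := by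
  have : NeZero k := ⟨by omega⟩
  by_cases hwalk : ∃ a b c u, (a, b) ∈ LA ∧ (b, c) ∈ LA ∧ (c, u) ∈ LA
  · obtain ⟨a, b, c, u, hab, hbc, hcu⟩ := hwalk
    have h3d : (3 * d : ℝ) ≤ k := by
      exact_mod_cast three_mul_le_of_isLeast_of_walk hk hk5 hd hab hbc hcu
    exact le_max_of_le_right (by linarith)
  · have h3L : (3 * LA.card : ℝ) ≤ r ^ 2 := by
      have := three_mul_card_le_sq_of_forall_not_walk fun a b c u hab hbc hcu =>
        hwalk ⟨a, b, c, u, hab, hbc, hcu⟩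
      rw [Fintype.card_fin] at this
      exact_mod_cast this
    -- for `r = 0` the quotient is `0`, which is also fine
    have hfrac : (LA.card : ℝ) / r ^ 2 ≤ 1 / 3 :=
      div_le_of_le_mul₀ (by positivity) (by norm_num) (by linarith)
    have hk0 : (0 : ℝ) ≤ k := k.cast_nonneg
    exact le_max_of_le_left (by nlinarith)

/-- Let `k ≥ 4`, `k ≠ 5`, and let `L` be a nonempty loopless directed graph on `r`
vertices. Then `f(C_k, L) = max{ k(1 − |E(L)|/r²), k − disc_{C_k}(L) } ≥ 2k/3`,
where `d = disc_{C_k}(L)` is the least number of arcs that can be added to the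
blowup `B(L)` (vertex set `Fin r × ℕ`, all arcs from `I_i` to `I_j` for
`(i,j) ∈ E(L)`) to create a directed `k`-cycle. -/
theorem stmt_19 (k r : ℕ) (hk : 4 ≤ k) (hk5 : k ≠ 5)
    (LA : Finset (Fin r × Fin r)) (hLne : LA.Nonempty)
    (hLloop : ∀ i : Fin r, (i, i) ∉ LA)
    (d : ℕ)
    (hd : IsLeast {m | ∃ F : Finset ((Fin r × ℕ) × (Fin r × ℕ)), F.card = m ∧
      ∃ v : ZMod k → Fin r × ℕ, Function.Injective v ∧
        ∀ i : ZMod k, ((v i).1, (v (i + 1)).1) ∈ LA ∨ (v i, v (i + 1)) ∈ F} d) :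
    (2 * (k : ℝ)) / 3 ≤
      max ((k : ℝ) * (1 - (LA.card : ℝ) / (r : ℝ) ^ 2)) ((k : ℝ) - (d : ℝ)) :=
  stmt_19_general k r hk hk5 LA d hd
end
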